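/- Let Y be a finite set with a distinguished element †, let N ≥ 1, and let g_1,…,g_N : Y → Y be functions each satisfying g_j(†) = †. Define subsets Ψ_m ⊆ Y inductively by Ψ_0 = {†} and Ψ_{m+1} = {†} ∪ {y ∈ Y : g_j(y) ∈ Ψ_m for all j = 1,…,N}. Then the following are equivalent: (a) there exists a positive integer M such that every M-fold composition g_{j_1} ∘ ⋯ ∘ g_{j_M} (arbitrary indices j_t ∈ {1,…,N}) has range equal to {†}; (b) ∪_{m≥0} Ψ_m = Y. -/

import Mathlib

/-! A point lies in `Ψ_m` exactly when every word of length `m` in the `g_j` sends it to `†`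
(the `†`-branch of the recursion is harmless since `†` is fixed by every `g_j`). Hence (a) with
constant `M` means `Ψ_M = Y`. Conversely the `Ψ_m` increase, so if they cover the finite set `Y`
some single `Ψ_M` already equals `Y`. -/

def PsiSet {Y ι : Type*} (dag : Y) (g : ι → Y → Y) : ℕ → Set Y
  | 0 => {dag}
  | m + 1 => {dag} ∪ {y | ∀ j, g j y ∈ PsiSet dag g m}

section

variable {Y ι : Type*} (g : ι → Y → Y)

def wordMap (l : List ι) : Y → Y :=
  l.foldr (fun j G => g j ∘ G) id

theorem wordMap_append (l₁ l₂ : List ι) :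
    wordMap g (l₁ ++ l₂) = wordMap g l₁ ∘ wordMap g l₂ := by
  induction l₁ with
  | nil => rfl
  | cons j l ih => simp only [wordMap, List.cons_append, List.foldr_cons] at ih ⊢; rw [ih]; rfl

theorem wordMap_apply_of_forall_eq {dag : Y} (hg : ∀ j, g j dag = dag) (l : List ι) :
    wordMap g l dag = dag := by
  induction l with
  | nil => rfl
  | cons j l ih => exact (congrArg (g j) ih).trans (hg j)

variable (dag : Y)

theorem psiSet_monotone : Monotone (PsiSet dag g) := by
  refine monotone_nat_of_le_succ fun m => ?_
  induction m with
  | zero => exact Set.subset_union_left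
  | succ m ih => exact Set.union_subset_union_right _ fun y hy j => ih (hy j)

theorem mem_psiSet_iff (hg : ∀ j, g j dag = dag) (m : ℕ) (y : Y) :
    y ∈ PsiSet dag g m ↔ ∀ l : List ι, l.length = m → wordMap g l y = dag := by
  induction m generalizing y with
  | zero => simp [PsiSet, List.length_eq_zero_iff, wordMap]
  | succ m ih =>
    constructor
    · rintro (rfl | hy) l hl
      · exact wordMap_apply_of_forall_eq g hg l
      · obtain rfl | ⟨l', j, rfl⟩ := List.eq_nil_or_concat l
        · simp at hl
        · rw [List.concat_eq_append, wordMap_append]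
          exact (ih (g j y)).1 (hy j) l' (by simpa using hl)
    · refine fun h => Or.inr fun j => (ih (g j y)).2 fun l hl => ?_
      have hw := h (l ++ [j]) (by simp [hl])
      rwa [wordMap_append] at hw

end

theorem stmt_4_general {Y : Type*} [Finite Y] (dag : Y) {N : ℕ}
    (g : Fin N → Y → Y) (hg : ∀ j, g j dag = dag) :
    (∃ M : ℕ, 0 < M ∧ ∀ l : List (Fin N), l.length = M →
      ∀ y : Y, l.foldr (fun j G => g j ∘ G) id y = dag) ↔
    (⋃ m, PsiSet dag g m) = Set.univ := by
  simp only [Set.iUnion_eq_univ_iff]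
  constructor
  · rintro ⟨M, -, hM⟩ y
    exact ⟨M, (mem_psiSet_iff g dag hg M y).2 fun l hl => hM l hl y⟩
  · intro hcover
    choose level hlevel using hcover
    have : Nonempty Y := ⟨dag⟩
    obtain ⟨M, hM⟩ := Finite.exists_le level
    refine ⟨M + 1, M.succ_pos, fun l hl y => ?_⟩
    have hy := psiSet_monotone g dag ((hM y).trans M.le_succ) (hlevel y)
    exact (mem_psiSet_iff g dag hg _ y).1 hy l hl

theorem stmt_4 {Y : Type*} [Finite Y] (dag : Y) {N : ℕ} (hN : 1 ≤ N)
    (g : Fin N → Y → Y) (hg : ∀ j, g j dag = dag) :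
    (∃ M : ℕ, 0 < M ∧ ∀ l : List (Fin N), l.length = M →
      ∀ y : Y, l.foldr (fun j G => g j ∘ G) id y = dag) ↔
    (⋃ m, PsiSet dag g m) = Set.univ :=
  stmt_4_general dag g hg
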